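/- Let x : ℝ → ℝ² be a smooth curve with nonvanishing velocity u satisfying the parameter-homogeneous equation u''/‖u‖³ = (u·u'')u/‖u‖⁵ + 3(u·u')u'/‖u‖⁵ − 3(u·u')²u/‖u‖⁷. Then its arclength reparametrization y(s) satisfies y''' + ‖y''‖²y' = 0; conversely, any curve whose arclength reparametrization satisfies y''' + ‖y''‖²y' = 0 satisfies the parameter-homogeneous equation in any regular parametrization. -/

import Mathlib

/-- Standard inner product on ℝ². -/
def dot (a b : ℝ × ℝ) : ℝ := a.1 * b.1 + a.2 * b.2

/-- Euclidean norm on ℝ². -/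
noncomputable def nrm (a : ℝ × ℝ) : ℝ := Real.sqrt (a.1 ^ 2 + a.2 ^ 2)

private lemma hd_fst {f : ℝ → ℝ × ℝ} {f' : ℝ × ℝ} {t : ℝ} (h : HasDerivAt f f' t) :
    HasDerivAt (fun s => (f s).1) f'.1 t := by
  simpa using h.hasFDerivAt.fst.hasDerivAt

private lemma hd_snd {f : ℝ → ℝ × ℝ} {f' : ℝ × ℝ} {t : ℝ} (h : HasDerivAt f f' t) :
    HasDerivAt (fun s => (f s).2) f'.2 t := by
  simpa using h.hasFDerivAt.snd.hasDerivAt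

private lemma hd_dot {f g : ℝ → ℝ × ℝ} {f' g' : ℝ × ℝ} {t : ℝ}
    (hf : HasDerivAt f f' t) (hg : HasDerivAt g g' t) :
    HasDerivAt (fun s => dot (f s) (g s)) (dot f' (g t) + dot (f t) g') t := by
  have h := ((hd_fst hf).mul (hd_fst hg)).add ((hd_snd hf).mul (hd_snd hg))
  convert h using 1
  · rfl
  · rfl
  · rfl
  · simp [dot]; ring

private lemma scomp' {g : ℝ → ℝ × ℝ} {g' : ℝ × ℝ} {h : ℝ → ℝ} {h' t : ℝ}
    (hg : HasDerivAt g g' (h t)) (hh : HasDerivAt h h' t) :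
    HasDerivAt (fun u => g (h u)) (h' • g') t := hg.scomp t hh

private lemma nrm_sq (a : ℝ × ℝ) : nrm a ^ 2 = dot a a := by
  rw [nrm, Real.sq_sqrt (by positivity)]; simp [dot]; ring

private lemma nrm_smul (c : ℝ) (a : ℝ × ℝ) : nrm (c • a) = |c| * nrm a := by
  simp only [nrm, Prod.smul_fst, Prod.smul_snd, smul_eq_mul]
  rw [show (c * a.1) ^ 2 + (c * a.2) ^ 2 = c ^ 2 * (a.1 ^ 2 + a.2 ^ 2) by ring,
    Real.sqrt_mul (sq_nonneg c), Real.sqrt_sq_eq_abs]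

theorem stmt_19 (x y : ℝ → ℝ × ℝ) (φ : ℝ → ℝ)
    (hx : ContDiff ℝ (⊤ : ℕ∞) x) (hy : ContDiff ℝ (⊤ : ℕ∞) y) (hφ : ContDiff ℝ (⊤ : ℕ∞) φ)
    (hφ' : ∀ t, 0 < deriv φ t) (hsurj : Function.Surjective φ)
    -- y is the arclength reparametrization of x
    (hcomp : x = y ∘ φ) (hunit : ∀ s, nrm (deriv y s) = 1)
    (hreg : ∀ t, deriv x t ≠ 0) :
    -- parameter-homogeneous equation for x ↔ circle equation for y
    (∀ t, (1 / (nrm (deriv x t)) ^ 3) • deriv (deriv (deriv x)) t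
        = (dot (deriv x t) (deriv (deriv (deriv x)) t)
              / (nrm (deriv x t)) ^ 5) • deriv x t
          + (3 * dot (deriv x t) (deriv (deriv x) t)
              / (nrm (deriv x t)) ^ 5) • deriv (deriv x) t
          - (3 * (dot (deriv x t) (deriv (deriv x) t)) ^ 2
              / (nrm (deriv x t)) ^ 7) • deriv x t) ↔
    (∀ s, deriv (deriv (deriv y)) s
        + (nrm (deriv (deriv y) s)) ^ 2 • deriv y s = 0) := by
  -- smoothness bookkeeping
  have hyi : ContDiff ℝ (⊤ : ℕ∞) y := hy.of_le (by simp)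
  have hφi : ContDiff ℝ (⊤ : ℕ∞) φ := hφ.of_le (by simp)
  have hy1 : ContDiff ℝ (⊤ : ℕ∞) (deriv y) := (contDiff_infty_iff_deriv.mp hyi).2
  have hy2 : ContDiff ℝ (⊤ : ℕ∞) (deriv (deriv y)) := (contDiff_infty_iff_deriv.mp hy1).2
  have hφ1 : ContDiff ℝ (⊤ : ℕ∞) (deriv φ) := (contDiff_infty_iff_deriv.mp hφi).2
  have hφ2 : ContDiff ℝ (⊤ : ℕ∞) (deriv (deriv φ)) := (contDiff_infty_iff_deriv.mp hφ1).2
  have Hy0 : ∀ s, HasDerivAt y (deriv y s) s :=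
    fun s => (hyi.differentiable (by norm_num) s).hasDerivAt
  have Hy1 : ∀ s, HasDerivAt (deriv y) (deriv (deriv y) s) s :=
    fun s => (hy1.differentiable (by norm_num) s).hasDerivAt
  have Hy2 : ∀ s, HasDerivAt (deriv (deriv y)) (deriv (deriv (deriv y)) s) s :=
    fun s => (hy2.differentiable (by norm_num) s).hasDerivAt
  have Hp0 : ∀ t, HasDerivAt φ (deriv φ t) t :=
    fun t => (hφi.differentiable (by norm_num) t).hasDerivAt
  have Hp1 : ∀ t, HasDerivAt (deriv φ) (deriv (deriv φ) t) t :=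
    fun t => (hφ1.differentiable (by norm_num) t).hasDerivAt
  have Hp2 : ∀ t, HasDerivAt (deriv (deriv φ)) (deriv (deriv (deriv φ)) t) t :=
    fun t => (hφ2.differentiable (by norm_num) t).hasDerivAt
  -- unit-speed identities
  have huu : ∀ s, dot (deriv y s) (deriv y s) = 1 := by
    intro s; rw [← nrm_sq, hunit s]; norm_num
  have hvw : ∀ s, dot (deriv y s) (deriv (deriv y) s) = 0 := by
    intro s
    have hD := hd_dot (Hy1 s) (Hy1 s)
    rw [show (fun u => dot (deriv y u) (deriv y u)) = fun _ => (1 : ℝ) from funext huu] at hD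
    have h0 := hD.deriv
    rw [deriv_const] at h0
    have hc : dot (deriv (deriv y) s) (deriv y s) = dot (deriv y s) (deriv (deriv y) s) := by
      simp [dot]; ring
    rw [hc] at h0
    linarith
  have hvz : ∀ s, dot (deriv y s) (deriv (deriv (deriv y)) s)
      = -dot (deriv (deriv y) s) (deriv (deriv y) s) := by
    intro s
    have hD := hd_dot (Hy1 s) (Hy2 s)
    rw [show (fun u => dot (deriv y u) (deriv (deriv y) u)) = fun _ => (0 : ℝ) from
      funext hvw] at hD
    have h0 := hD.deriv
    rw [deriv_const] at h0
    linarith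
  -- derivative formulas for x
  have hx1 : deriv x = fun t => deriv φ t • deriv y (φ t) := by
    funext t
    rw [hcomp]
    exact ((Hy0 (φ t)).scomp t (Hp0 t)).deriv
  have hx2 : deriv (deriv x)
      = fun t => deriv (deriv φ) t • deriv y (φ t) + deriv φ t ^ 2 • deriv (deriv y) (φ t) := by
    funext t
    rw [hx1]
    have h1 := (Hp1 t).smul (scomp' (Hy1 (φ t)) (Hp0 t))
    exact h1.deriv.trans (by module)
  have hx3 : ∀ t, deriv (deriv (deriv x)) t
      = deriv (deriv (deriv φ)) t • deriv y (φ t)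
        + (3 * (deriv φ t * deriv (deriv φ) t)) • deriv (deriv y) (φ t)
        + deriv φ t ^ 3 • deriv (deriv (deriv y)) (φ t) := by
    intro t
    rw [hx2]
    have h1 := (Hp2 t).smul (scomp' (Hy1 (φ t)) (Hp0 t))
    have h2 := ((Hp1 t).pow 2).smul (scomp' (Hy2 (φ t)) (Hp0 t))
    exact (h1.add h2).deriv.trans (by push_cast [Pi.pow_apply]; module)
  have hn : ∀ t, nrm (deriv x t) = deriv φ t := by
    intro t
    rw [hx1]
    simp only []
    rw [nrm_smul, hunit, abs_of_pos (hφ' t), mul_one]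
  -- pointwise equivalence
  have key : ∀ t,
      ((1 / (nrm (deriv x t)) ^ 3) • deriv (deriv (deriv x)) t
        = (dot (deriv x t) (deriv (deriv (deriv x)) t)
              / (nrm (deriv x t)) ^ 5) • deriv x t
          + (3 * dot (deriv x t) (deriv (deriv x) t)
              / (nrm (deriv x t)) ^ 5) • deriv (deriv x) t
          - (3 * (dot (deriv x t) (deriv (deriv x) t)) ^ 2
              / (nrm (deriv x t)) ^ 7) • deriv x t)
      ↔ (deriv (deriv (deriv y)) (φ t)
          + (nrm (deriv (deriv y) (φ t))) ^ 2 • deriv y (φ t) = 0) := by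
    intro t
    have ha : deriv φ t ≠ 0 := ne_of_gt (hφ' t)
    rw [hn t, hx3 t, hx2, hx1]
    simp only []
    set a := deriv φ t with ha_def
    set b := deriv (deriv φ) t with hb_def
    set c := deriv (deriv (deriv φ)) t with hc_def
    set v := deriv y (φ t) with hv_def
    set w := deriv (deriv y) (φ t) with hw_def
    set z := deriv (deriv (deriv y)) (φ t) with hz_def
    have h1 : v.1 * v.1 + v.2 * v.2 = 1 := huu (φ t)
    have h2 : v.1 * w.1 + v.2 * w.2 = 0 := hvw (φ t)
    have h3 : v.1 * z.1 + v.2 * z.2 = -(w.1 * w.1 + w.2 * w.2) := hvz (φ t)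
    have hdv2 : dot (a • v) (b • v + a ^ 2 • w) = a * b := by
      simp only [dot, Prod.smul_fst, Prod.smul_snd, Prod.fst_add, Prod.snd_add, smul_eq_mul]
      linear_combination (a * b) * h1 + a ^ 3 * h2
    have hdv3 : dot (a • v) (c • v + (3 * (a * b)) • w + a ^ 3 • z)
        = a * c - a ^ 4 * dot w w := by
      simp only [dot, Prod.smul_fst, Prod.smul_snd, Prod.fst_add, Prod.snd_add, smul_eq_mul]
      linear_combination (a * c) * h1 + (3 * a ^ 2 * b) * h2 + a ^ 4 * h3
    rw [hdv2, hdv3, nrm_sq]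
    have hdiff : (1 / a ^ 3) • (c • v + (3 * (a * b)) • w + a ^ 3 • z)
        - (((a * c - a ^ 4 * dot w w) / a ^ 5) • (a • v)
          + (3 * (a * b) / a ^ 5) • (b • v + a ^ 2 • w)
          - (3 * (a * b) ^ 2 / a ^ 7) • (a • v))
        = z + dot w w • v := by
      match_scalars <;> field_simp <;> ring
    rw [← sub_eq_zero, hdiff]
  constructor
  · intro h s
    obtain ⟨t, rfl⟩ := hsurj s
    exact (key t).mp (h t)
  · intro h t
    exact (key t).mpr (h (φ t))
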